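/- Let N ∈ ℕ, k ∈ {0,...,N}, p ≥ 0, X an ℕ-valued random variable with finite p-th moment, and Y an ℕ-valued random variable independent of X with finite (N−k+1+p)-th moment. For f : ℕ → ℝ with f(x) = O(x^p), setting ‖f‖_{N,p} = sup_{x ≥ 1} |Δ^{N+1}f(x)|/x^p, the discrete Taylor remainder satisfies |δ_{N−k}(Δ^k f(·+1), X, Y)| ≤ max(2^{p−1}, 1)·‖f‖_{N,p}·( E[X^p]·m_Y^{(N−k+1)} + m_Y^{(N−k+1),p} ), where m_Y^{(j)} = E[C(Y,j)] and m_Y^{(j),p} = E[C(Y,j)·Y^p]. -/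

import Mathlib

/-!
Every strictly increasing tuple `j_1 < … < j_{M+1}` in `{0, …, Y − 1}` contributes a value
`Δ^{N+1} f(X + j_1 + 1)`, which is at most `‖f‖_{N,p} (X + Y)^p` in absolute value, and there are
`C(Y, N−k+1)` such tuples. Splitting `(X + Y)^p ≤ max(2^{p−1}, 1)(X^p + Y^p)` and integrating,
independence factors the `X^p` term, while `C(Y, j) ≤ Y^j` makes all the moments finite.
-/

open MeasureTheory ProbabilityTheory Filter

def fdiff (f : ℕ → ℝ) : ℕ → ℝ := fun x => f (x + 1) - f x

/-- The sum `Σ_{0 ≤ j_1 < ... < j_{M+1} < y} Δ^{M+1} f(x + j_1)`: strictly increasing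
`(M+1)`-tuples in `{0,…,y−1}` are identified with `(M+1)`-element subsets of
`Finset.range y`, with `j_1` the least element. -/
noncomputable def tupleSum (f : ℕ → ℝ) (x y M : ℕ) : ℝ :=
  ∑ s ∈ (Finset.range y).powersetCard (M + 1), fdiff^[M + 1] f (x + WithTop.untopD 0 s.min)

/-- `‖f‖_{N,p} = sup_{x ≥ 1} |Δ^{N+1}f(x)|/x^p` (the supremum over `x ≥ 1` is written
with the shifted index `x + 1`). -/
noncomputable def fNorm (N : ℕ) (p : ℝ) (f : ℕ → ℝ) : ℝ :=
  ⨆ x : ℕ, |fdiff^[N + 1] f (x + 1)| / ((x : ℝ) + 1) ^ p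

open Asymptotics
open scoped NNReal

theorem Real.rpow_add_le_max_mul_rpow_add_rpow {p a b : ℝ} (hp : 0 ≤ p) (ha : 0 ≤ a)
    (hb : 0 ≤ b) : (a + b) ^ p ≤ max ((2 : ℝ) ^ (p - 1)) 1 * (a ^ p + b ^ p) := by
  rcases le_total 1 p with h1 | h1
  · lift a to ℝ≥0 using ha
    lift b to ℝ≥0 using hb
    calc ((a : ℝ) + b) ^ p ≤ (2 : ℝ) ^ (p - 1) * (a ^ p + b ^ p) := by
          exact_mod_cast NNReal.rpow_add_le_mul_rpow_add_rpow a b h1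
      _ ≤ _ := by gcongr; exact le_max_left _ _
  · calc (a + b) ^ p ≤ a ^ p + b ^ p := Real.rpow_add_le_add_rpow ha hb hp h1
      _ ≤ _ := le_mul_of_one_le_left (by positivity) (le_max_right _ _)

theorem Nat.cast_choose_mul_rpow_le_rpow_add {j : ℕ} (hj : 1 ≤ j) (p : ℝ) (n : ℕ) :
    (n.choose j : ℝ) * (n : ℝ) ^ p ≤ (n : ℝ) ^ ((j : ℝ) + p) := by
  rcases n.eq_zero_or_pos with rfl | hn
  · simpa [Nat.choose_eq_zero_of_lt hj] using Real.rpow_nonneg le_rfl _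
  · have hn' : (0 : ℝ) < n := by exact_mod_cast hn
    rw [Real.rpow_add hn', Real.rpow_natCast]
    gcongr
    exact_mod_cast n.choose_le_pow j

theorem Nat.cast_choose_le_rpow_add {j : ℕ} (hj : 1 ≤ j) {p : ℝ} (hp : 0 ≤ p) (n : ℕ) :
    (n.choose j : ℝ) ≤ (n : ℝ) ^ ((j : ℝ) + p) := by
  rcases n.eq_zero_or_pos with rfl | hn
  · simpa [Nat.choose_eq_zero_of_lt hj] using Real.rpow_nonneg le_rfl _
  · refine le_trans ?_ (Nat.cast_choose_mul_rpow_le_rpow_add hj p n)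
    exact le_mul_of_one_le_right (by positivity) (Real.one_le_rpow (by exact_mod_cast hn) hp)

theorem fdiff_iterate_comp_add_one (n : ℕ) (g : ℕ → ℝ) :
    fdiff^[n] (fun x => g (x + 1)) = fun x => fdiff^[n] g (x + 1) :=
  Function.Commute.iterate_left (f := fdiff) (g := fun g x => g (x + 1)) (fun _ => rfl) n g

theorem Asymptotics.IsBigO.fdiff_left {f g : ℕ → ℝ} (hf : f =O[atTop] g)
    (hg : (fun x => g (x + 1)) =O[atTop] g) : fdiff f =O[atTop] g :=
  ((hf.comp_tendsto (tendsto_add_atTop_nat 1)).trans hg).sub hf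

theorem Asymptotics.IsBigO.iterate_fdiff_left {f g : ℕ → ℝ} (hf : f =O[atTop] g)
    (hg : (fun x => g (x + 1)) =O[atTop] g) (n : ℕ) : fdiff^[n] f =O[atTop] g := by
  induction n with
  | zero => exact hf
  | succ n ih => rw [Function.iterate_succ_apply']; exact ih.fdiff_left hg

theorem isBigO_natCast_add_one_rpow {p : ℝ} (hp : 0 ≤ p) :
    (fun x : ℕ => ((x + 1 : ℕ) : ℝ) ^ p) =O[atTop] fun x : ℕ => (x : ℝ) ^ p := by
  simp only [Nat.cast_add_one]
  have h_one : (fun _ : ℕ => (1 : ℝ)) =O[atTop] fun x : ℕ => (x : ℝ) :=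
    ((isLittleO_one_left_iff ℝ).2
      (tendsto_norm_atTop_atTop.comp tendsto_natCast_atTop_atTop)).isBigO
  exact ((isBigO_refl _ _).add h_one).rpow hp (Eventually.of_forall fun x => by positivity)

theorem bddAbove_range_abs_comp_add_one_div_rpow {u : ℕ → ℝ} {p : ℝ}
    (hu : u =O[atTop] fun x : ℕ => (x : ℝ) ^ p) :
    BddAbove (Set.range fun x : ℕ => |u (x + 1)| / ((x : ℝ) + 1) ^ p) := by
  have h := hu.comp_tendsto (tendsto_add_atTop_nat 1)
  rw [isBigO_iff_isBoundedUnder_le_div (Eventually.of_forall fun x => by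
    simp only [Function.comp_apply]; positivity)] at h
  simpa [Function.comp_def, Real.norm_eq_abs, abs_of_pos, Real.rpow_pos_of_pos,
    Nat.cast_add_one_pos] using h.bddAbove_range

theorem abs_fdiff_iterate_le_fNorm_mul {N : ℕ} {p : ℝ} (hp : 0 ≤ p) {f : ℕ → ℝ}
    (hf : f =O[atTop] fun x : ℕ => (x : ℝ) ^ p) (x : ℕ) :
    |fdiff^[N + 1] f (x + 1)| ≤ fNorm N p f * ((x : ℝ) + 1) ^ p := by
  have h := le_ciSup (bddAbove_range_abs_comp_add_one_div_rpow
    (hf.iterate_fdiff_left (isBigO_natCast_add_one_rpow hp) (N + 1))) x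
  rwa [div_le_iff₀ (by positivity)] at h

theorem fNorm_nonneg (N : ℕ) (p : ℝ) (f : ℕ → ℝ) : 0 ≤ fNorm N p f :=
  Real.iSup_nonneg fun _ => div_nonneg (abs_nonneg _) (Real.rpow_nonneg (by positivity) p)

theorem abs_tupleSum_le {g : ℕ → ℝ} {x y M : ℕ} {B : ℝ}
    (hB : ∀ m < y, |fdiff^[M + 1] g (x + m)| ≤ B) :
    |tupleSum g x y M| ≤ y.choose (M + 1) * B := by
  have hterm : ∀ s ∈ (Finset.range y).powersetCard (M + 1),
      |fdiff^[M + 1] g (x + WithTop.untopD 0 s.min)| ≤ B := by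
    intro s hs
    obtain ⟨hsub, hcard⟩ := Finset.mem_powersetCard.mp hs
    have hne : s.Nonempty := Finset.card_pos.mp (by omega)
    rw [← Finset.coe_min' hne, WithTop.untopD_coe]
    exact hB _ (Finset.mem_range.mp (hsub (s.min'_mem hne)))
  calc |tupleSum g x y M|
      ≤ ∑ s ∈ (Finset.range y).powersetCard (M + 1),
          |fdiff^[M + 1] g (x + WithTop.untopD 0 s.min)| := Finset.abs_sum_le_sum_abs _ _
    _ ≤ ((Finset.range y).powersetCard (M + 1)).card • B := Finset.sum_le_card_nsmul _ _ _ hterm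
    _ = y.choose (M + 1) * B := by
      rw [Finset.card_powersetCard, Finset.card_range, nsmul_eq_mul]

theorem abs_tupleSum_fdiff_iterate_le {N k : ℕ} (hk : k ≤ N) {p : ℝ} (hp : 0 ≤ p) {f : ℕ → ℝ}
    (hf : f =O[atTop] fun x : ℕ => (x : ℝ) ^ p) (x y : ℕ) :
    |tupleSum (fun z => fdiff^[k] f (z + 1)) x y (N - k)|
      ≤ max ((2 : ℝ) ^ (p - 1)) 1 * fNorm N p f *
          ((y.choose (N - k + 1) : ℝ) * ((x : ℝ) ^ p + (y : ℝ) ^ p)) := by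
  have hxm : ∀ m < y, ((x + m : ℕ) : ℝ) + 1 ≤ x + y := fun m hm => by
    have : (m : ℝ) + 1 ≤ y := by exact_mod_cast hm
    push_cast; linarith
  have hiter : ∀ m, fdiff^[N - k + 1] (fun z => fdiff^[k] f (z + 1)) (x + m)
      = fdiff^[N + 1] f (x + m + 1) := fun m => by
    rw [fdiff_iterate_comp_add_one, ← Function.iterate_add_apply,
      show N - k + 1 + k = N + 1 by omega]
  have hnorm := fNorm_nonneg N p f
  calc _ ≤ y.choose (N - k + 1)
        * (fNorm N p f * (max ((2 : ℝ) ^ (p - 1)) 1 * ((x : ℝ) ^ p + (y : ℝ) ^ p))) := by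
        refine abs_tupleSum_le fun m hm => ?_
        calc |fdiff^[N - k + 1] (fun z => fdiff^[k] f (z + 1)) (x + m)|
            ≤ fNorm N p f * (((x + m : ℕ) : ℝ) + 1) ^ p := by
              rw [hiter]; exact abs_fdiff_iterate_le_fNorm_mul hp hf _
          _ ≤ fNorm N p f * ((x : ℝ) + y) ^ p :=
              mul_le_mul_of_nonneg_left (Real.rpow_le_rpow (by positivity) (hxm m hm) hp) hnorm
          _ ≤ _ := by
              gcongr
              exact Real.rpow_add_le_max_mul_rpow_add_rpow hp (by positivity) (by positivity)
    _ = _ := by ring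

section Integrals

variable {Ω : Type*} [MeasurableSpace Ω] {μ : Measure Ω}

theorem MeasureTheory.Integrable.comp_of_abs_le {Y : Ω → ℕ} (hY : Measurable Y) {u v : ℕ → ℝ}
    (huv : ∀ n, |u n| ≤ v n) (hv : Integrable (fun ω => v (Y ω)) μ) :
    Integrable (fun ω => u (Y ω)) μ :=
  hv.mono' ((measurable_of_countable u).comp hY).aestronglyMeasurable
    (ae_of_all _ fun ω => huv (Y ω))

theorem ProbabilityTheory.IndepFun.integrable_mul_add {A B C : Ω → ℝ} (hAB : IndepFun A B μ)
    (hA : Integrable A μ) (hB : Integrable B μ) (hBC : Integrable (fun ω => B ω * C ω) μ) :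
    Integrable (fun ω => B ω * (A ω + C ω)) μ :=
  ((hAB.integrable_mul hA hB).add hBC).congr <| ae_of_all _ fun ω => by
    simp only [Pi.add_apply, Pi.mul_apply]; ring

theorem ProbabilityTheory.IndepFun.integral_mul_add {A B C : Ω → ℝ} (hAB : IndepFun A B μ)
    (hA : Integrable A μ) (hB : Integrable B μ) (hBC : Integrable (fun ω => B ω * C ω) μ) :
    ∫ ω, B ω * (A ω + C ω) ∂μ = (∫ ω, A ω ∂μ) * (∫ ω, B ω ∂μ) + ∫ ω, B ω * C ω ∂μ := by
  rw [← hAB.integral_mul_eq_mul_integral hA.1 hB.1, ← integral_add (hAB.integrable_mul hA hB) hBC]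
  exact integral_congr_ae (ae_of_all _ fun ω => by simp only [Pi.mul_apply]; ring)

end Integrals

theorem taylor_remainder_estimate_general {Ω : Type*} [MeasurableSpace Ω] (μ : Measure Ω)
    (N k : ℕ) (hk : k ≤ N) (p : ℝ) (hp : 0 ≤ p)
    (X Y : Ω → ℕ) (hY : Measurable Y) (hindep : IndepFun X Y μ)
    (hXp : Integrable (fun ω => ((X ω : ℝ)) ^ p) μ)
    (hYmom : Integrable (fun ω => ((Y ω : ℝ)) ^ ((N : ℝ) - (k : ℝ) + 1 + p)) μ)
    (f : ℕ → ℝ) (hf : (fun x : ℕ => f x) =O[atTop] fun x : ℕ => (x : ℝ) ^ p) :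
    |∫ ω, tupleSum (fun x => fdiff^[k] f (x + 1)) (X ω) (Y ω) (N - k) ∂μ|
      ≤ max ((2 : ℝ) ^ (p - 1)) 1 * fNorm N p f *
          ((∫ ω, ((X ω : ℝ)) ^ p ∂μ) * (∫ ω, ((Y ω).choose (N - k + 1) : ℝ) ∂μ)
            + ∫ ω, ((Y ω).choose (N - k + 1) : ℝ) * ((Y ω : ℝ)) ^ p ∂μ) := by
  set j := N - k + 1 with hj
  have hYj : Integrable (fun ω => (Y ω : ℝ) ^ ((j : ℝ) + p)) μ := by
    convert hYmom using 3
    push_cast [hj, hk]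
    ring
  have hC : Integrable (fun ω => ((Y ω).choose j : ℝ)) μ :=
    hYj.comp_of_abs_le hY (fun n => (abs_of_nonneg (Nat.cast_nonneg _)).trans_le
      (Nat.cast_choose_le_rpow_add (Nat.le_add_left 1 _) hp n))
  have hCY : Integrable (fun ω => ((Y ω).choose j : ℝ) * (Y ω : ℝ) ^ p) μ :=
    hYj.comp_of_abs_le hY (fun n => (abs_of_nonneg (by positivity)).trans_le
      (Nat.cast_choose_mul_rpow_le_rpow_add (Nat.le_add_left 1 _) p n))
  have hindep' : IndepFun (fun ω => (X ω : ℝ) ^ p) (fun ω => ((Y ω).choose j : ℝ)) μ :=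
    hindep.comp (φ := fun n : ℕ => (n : ℝ) ^ p) (ψ := fun n : ℕ => (n.choose j : ℝ))
      (measurable_of_countable _) (measurable_of_countable _)
  rw [← Real.norm_eq_abs]
  calc _ ≤ ∫ ω, max ((2 : ℝ) ^ (p - 1)) 1 * fNorm N p f *
        (((Y ω).choose j : ℝ) * ((X ω : ℝ) ^ p + (Y ω : ℝ) ^ p)) ∂μ :=
        norm_integral_le_of_norm_le ((hindep'.integrable_mul_add hXp hC hCY).const_mul _)
          (ae_of_all _ fun ω => abs_tupleSum_fdiff_iterate_le (f := f) hk hp hf (X ω) (Y ω))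
    _ = _ := by rw [integral_const_mul, hindep'.integral_mul_add hXp hC hCY]

/-- Estimate of the discrete Taylor remainder:
`|δ_{N−k}(Δ^k f(·+1), X, Y)| ≤ max(2^{p−1},1)·‖f‖_{N,p}·(E[X^p]·m_Y^{(N−k+1)} + m_Y^{(N−k+1),p})`
where `m_Y^{(j)} = E[C(Y,j)]` and `m_Y^{(j),p} = E[C(Y,j)·Y^p]`. -/
theorem taylor_remainder_estimate {Ω : Type*} [MeasurableSpace Ω] (μ : Measure Ω)
    [IsProbabilityMeasure μ] (N k : ℕ) (hk : k ≤ N) (p : ℝ) (hp : 0 ≤ p)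
    (X Y : Ω → ℕ) (hX : Measurable X) (hY : Measurable Y) (hindep : IndepFun X Y μ)
    (hXp : Integrable (fun ω => ((X ω : ℝ)) ^ p) μ)
    (hYmom : Integrable (fun ω => ((Y ω : ℝ)) ^ ((N : ℝ) - (k : ℝ) + 1 + p)) μ)
    (f : ℕ → ℝ) (hf : (fun x : ℕ => f x) =O[atTop] fun x : ℕ => (x : ℝ) ^ p) :
    |∫ ω, tupleSum (fun x => fdiff^[k] f (x + 1)) (X ω) (Y ω) (N - k) ∂μ|
      ≤ max ((2 : ℝ) ^ (p - 1)) 1 * fNorm N p f *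
          ((∫ ω, ((X ω : ℝ)) ^ p ∂μ) * (∫ ω, ((Y ω).choose (N - k + 1) : ℝ) ∂μ)
            + ∫ ω, ((Y ω).choose (N - k + 1) : ℝ) * ((Y ω : ℝ)) ^ p ∂μ) :=
  taylor_remainder_estimate_general μ N k hk p hp X Y hY hindep hXp hYmom f hf
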